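/- The polynomial y0²z0² + y0²z1² + y1²z0² − 2·y0·y1·z0·z1 + y1²z1² is irreducible in the polynomial ring ℂ[y0,y1,z0,z1]. -/

import Mathlib

/-!
Splitting off `y0`, the polynomial is the quadratic
`(z0² + z1²) y0² - 2 y1 z0 z1 y0 + y1² (z0² + z1²)` over the UFD `ℂ[y1, z0, z1]`. Its first two
coefficients are coprime, so it is primitive, and by Gauss's lemma it is irreducible as soon as it
has no root in the fraction field, i.e. as soon as its discriminant
`-4 y1² (z0⁴ + z0² z1² + z1⁴)` is not a square there; the ring being integrally closed, it suffices
that the discriminant is not a square in `ℂ[y1, z0, z1]`. A square is singular along its zero set,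
whereas the discriminant vanishes at `(y1, z0, z1) = (1, t, 1)`, `t` a primitive sixth root of
unity, where its derivative in `z0` does not.
-/

open MvPolynomial

/-- The bi-degree (2,2) polynomial `y0²z0² + y0²z1² + y1²z0² − 2y0y1z0z1 + y1²z1²`,
with variables `X 0 = y0, X 1 = y1, X 2 = z0, X 3 = z1`; it is the specialization
`Q̃(0,1,y0,y1,z0,z1)`. -/
noncomputable def Qt01 : MvPolynomial (Fin 4) ℂ :=
  X 0 ^ 2 * X 2 ^ 2 + X 0 ^ 2 * X 3 ^ 2 + X 1 ^ 2 * X 2 ^ 2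
    - 2 * (X 0 * X 1 * X 2 * X 3) + X 1 ^ 2 * X 3 ^ 2

theorem IsIntegrallyClosed.isSquare_of_isSquare_algebraMap {R K : Type*} [CommRing R] [IsDomain R]
    [IsIntegrallyClosed R] [Field K] [Algebra R K] [IsFractionRing R K] {r : R}
    (h : IsSquare (algebraMap R K r)) : IsSquare r := by
  obtain ⟨x, hx⟩ := h
  obtain ⟨y, rfl⟩ := IsIntegrallyClosed.exists_algebraMap_eq_of_isIntegral_pow (R := R) (x := x)
    two_pos (by rw [sq, ← hx]; exact isIntegral_algebraMap)
  exact ⟨y, IsFractionRing.injective R K (by rw [hx, map_mul])⟩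

namespace Polynomial

theorem isPrimitive_quadratic_of_isRelPrime {R : Type*} [CommSemiring R] {a b c : R}
    (h : IsRelPrime a b) : (C a * X ^ 2 + C b * X + C c).IsPrimitive := by
  refine isPrimitive_iff_isUnit_of_C_dvd.mpr fun r hr => h ?_ ?_
  · simpa using (C_dvd_iff_dvd_coeff _ _).mp hr 2
  · simpa using (C_dvd_iff_dvd_coeff _ _).mp hr 1

theorem irreducible_quadratic_of_not_isSquare_discrim {R : Type*} [CommRing R] [IsDomain R]
    [IsGCDMonoid R] {a b c : R} (hab : IsRelPrime a b) (hd : ¬IsSquare (discrim a b c)) :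
    Irreducible (C a * X ^ 2 + C b * X + C c) := by
  have ha : a ≠ 0 := by
    rintro rfl
    exact hd ⟨b, by simp [discrim, sq]⟩
  have ha' : algebraMap R (FractionRing R) a ≠ 0 :=
    (map_ne_zero_iff _ (IsFractionRing.injective R _)).mpr ha
  rw [(isPrimitive_quadratic_of_isRelPrime hab).irreducible_iff_irreducible_map_fraction_map
    (K := FractionRing R)]
  refine irreducible_of_degree_le_three_of_not_isRoot ?_ fun x hx => hd ?_
  · simp [natDegree_quadratic ha']
  · refine IsIntegrallyClosed.isSquare_of_isSquare_algebraMap (K := FractionRing R)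
      ⟨2 * algebraMap R _ a * x + algebraMap R _ b, ?_⟩
    rw [discrim, map_sub, map_mul, map_mul, map_pow, map_ofNat, ← discrim, ← sq]
    exact discrim_eq_sq_of_quadratic_eq_zero (by simpa [sq] using hx)

end Polynomial

namespace MvPolynomial

variable {σ R : Type*} [CommSemiring R] {p : MvPolynomial σ R} {x : σ → R} {i : σ}

theorem not_X_dvd_of_eval_ne_zero (hx : x i = 0) (hp : eval x p ≠ 0) : ¬X i ∣ p := by
  rintro ⟨q, rfl⟩
  simp [hx] at hp

theorem not_isSquare_of_eval_pderiv_ne_zero [NoZeroDivisors R] (hp : eval x p = 0)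
    (hd : eval x (pderiv i p) ≠ 0) : ¬IsSquare p := by
  rintro ⟨r, rfl⟩
  have hr : eval x r = 0 := by simpa using hp
  simp [Derivation.leibniz, hr] at hd

end MvPolynomial

-- In `ℂ[y1, z0, z1] = MvPolynomial (Fin 3) ℂ` the variables are `X 0 = y1`, `X 1 = z0`, `X 2 = z1`.
theorem finSuccEquiv_Qt01 : finSuccEquiv ℂ 3 Qt01 =
    Polynomial.C (X 1 ^ 2 + X 2 ^ 2) * Polynomial.X ^ 2
      + Polynomial.C (-2 * X 0 * X 1 * X 2) * Polynomial.X
      + Polynomial.C (X 0 ^ 2 * (X 1 ^ 2 + X 2 ^ 2)) := by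
  simp only [Qt01, map_add, map_sub, map_mul, map_pow, map_ofNat, finSuccEquiv_X_zero]
  simp only [show (1 : Fin 4) = Fin.succ 0 from rfl, show (2 : Fin 4) = Fin.succ 1 from rfl,
    show (3 : Fin 4) = Fin.succ 2 from rfl, finSuccEquiv_X_succ, map_neg, map_ofNat]
  ring

theorem isRelPrime_X_sq_add_X_sq_X_mul :
    IsRelPrime (X 1 ^ 2 + X 2 ^ 2 : MvPolynomial (Fin 3) ℂ) (-2 * X 0 * X 1 * X 2) := by
  have hX : ∀ i, IsRelPrime (X 1 ^ 2 + X 2 ^ 2 : MvPolynomial (Fin 3) ℂ) (X i) := fun i =>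
    (X_prime.irreducible.isRelPrime_iff_not_dvd.mpr <|
      not_X_dvd_of_eval_ne_zero (x := Function.update 1 i 0) (by simp)
        (by fin_cases i <;> simp)).symm
  have h2 : IsUnit (-2 : MvPolynomial (Fin 3) ℂ) := by
    have h := (Ne.isUnit (by norm_num : (-2 : ℂ) ≠ 0)).map (C : ℂ →+* MvPolynomial (Fin 3) ℂ)
    rwa [map_neg, map_ofNat] at h
  exact ((h2.isRelPrime_right.mul_right (hX 0)).mul_right (hX 1)).mul_right (hX 2)

theorem not_isSquare_discrim : ¬IsSquare (discrim (X 1 ^ 2 + X 2 ^ 2) (-2 * X 0 * X 1 * X 2)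
    (X 0 ^ 2 * (X 1 ^ 2 + X 2 ^ 2)) : MvPolynomial (Fin 3) ℂ) := by
  have hD : discrim (X 1 ^ 2 + X 2 ^ 2) (-2 * X 0 * X 1 * X 2) (X 0 ^ 2 * (X 1 ^ 2 + X 2 ^ 2))
      = C (-4) * (X 0 ^ 2 * (X 1 ^ 4 + X 1 ^ 2 * X 2 ^ 2 + X 2 ^ 4) : MvPolynomial (Fin 3) ℂ) := by
    simp only [discrim, map_neg, map_ofNat]
    ring
  obtain ⟨s, hs⟩ := IsAlgClosed.exists_pow_nat_eq (-3 : ℂ) two_pos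
  obtain ⟨t, ht⟩ : ∃ t : ℂ, t ^ 2 - t + 1 = 0 := ⟨(1 + s) / 2, by linear_combination hs / 4⟩
  have ht_deriv : 4 * t ^ 3 + 2 * t ≠ 0 := by
    intro h
    have h' : t * (2 * t - 1) = 0 := by linear_combination h / 2 - 2 * t * ht
    rcases mul_eq_zero.mp h' with h0 | h1
    · simp [h0] at ht
    · rw [show t = 1 / 2 by linear_combination h1 / 2] at ht
      norm_num at ht
  rw [hD]
  refine not_isSquare_of_eval_pderiv_ne_zero (x := ![1, t, 1]) (i := 1) ?_ ?_
  · simpa using (by linear_combination (t ^ 2 + t + 1) * ht : t ^ 4 + t ^ 2 + 1 = 0)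
  · simpa [Derivation.leibniz, Derivation.leibniz_pow, pderiv_X] using ht_deriv

/-- `y0²z0² + y0²z1² + y1²z0² − 2y0y1z0z1 + y1²z1²` is irreducible in `ℂ[y0,y1,z0,z1]`. -/
theorem Qt01_irreducible : Irreducible Qt01 := by
  rw [← MulEquiv.irreducible_iff (finSuccEquiv ℂ 3), finSuccEquiv_Qt01]
  exact Polynomial.irreducible_quadratic_of_not_isSquare_discrim isRelPrime_X_sq_add_X_sq_X_mul
    not_isSquare_discrim
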